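/- arXiv:2106.06121 — 4 statements merged into one kernel-verified Lean document; each statement's English description precedes it below -/
import Mathlib

section
/- There exist universal constants c_b > 0 and C > 1 so that the following holds. Let n be a sufficiently large integer (n greater than a universal constant), let α > 0, and let θ ∈ [1/(c_b·n), c_b]. Let Y_1,…,Y_n be i.i.d. Bernoulli random variables with parameter θ, and set X = (X_1,…,X_n) with X_i = α·Y_i for each i. Then for every t ∈ [0, α·√n/2], one has ℙ{ ‖X‖₂ ≥ α·√(θ·n) + t } ≥ (1/C)·exp( −C · log(2 + t²/(θ·n·α²)) · t²/α² ). -/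
open MeasureTheory ENNReal

/-- `μ` is the Bernoulli measure with parameter `θ` (as a measure on `ℝ`):
it is a probability measure giving mass `θ` to `{1}` and mass `1-θ` to `{0}`. -/
def IsBernoulli (μ : Measure ℝ) (θ : ℝ) : Prop :=
  IsProbabilityMeasure μ ∧ μ {1} = ENNReal.ofReal θ ∧ μ {0} = ENNReal.ofReal (1 - θ)

/-- The Euclidean norm on `Fin n → ℝ`. -/
noncomputable def euclNorm {n : ℕ} (x : Fin n → ℝ) : ℝ := Real.sqrt (∑ i, (x i) ^ 2)

/-!
Let `K` be the number of coordinates of `Y` equal to `1`. Then `‖X‖₂ = α √K` with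
`K ~ Bin(n, θ)`, so the event is the binomial upper tail `K ≥ (s + u)²`, where `s = √(θn)` and
`u = t / α`. The binomial weights are unimodal with mode `⌊(n + 1)θ⌋`, and Chebyshev's inequality
puts mass `8/9` on `≈ 6s` values, so the mode has weight `≥ 1 / (8s)`. From the mode up to
`M = ⌈(s + u)²⌉ + ⌈s⌉` each ratio of consecutive weights is `1 + O((su + u² + s) / s²)` if
`u ≤ s / 10`, and `O(u² / s²)` otherwise; over the `O(su + u² + s)` steps this costs a factor
`exp (-O(1 + log (2 + u² / s²) u²))`. The `s` weights between `⌈(s + u)²⌉` and `M` are all at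
least the one at `M`, which recovers the `1 / s`.
-/

open Finset Real

lemma le_pow_sub_mul_of_le_mul_succ {R : Type*} [CommSemiring R] [PartialOrder R]
    [IsOrderedRing R] {f : ℕ → R} {c : R} (hc : 0 ≤ c) {a b : ℕ} (hab : a ≤ b)
    (h : ∀ j, a ≤ j → j < b → f j ≤ c * f (j + 1)) : f a ≤ c ^ (b - a) * f b := by
  induction b, hab using Nat.le_induction with
  | base => simp
  | succ b hab ih =>
    calc f a ≤ c ^ (b - a) * f b := ih fun j hj hjb => h j hj (by omega)
      _ ≤ c ^ (b - a) * (c * f (b + 1)) :=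
          mul_le_mul_of_nonneg_left (h b hab (by omega)) (pow_nonneg hc _)
      _ = c ^ (b + 1 - a) * f (b + 1) := by rw [Nat.sub_add_comm hab, pow_succ, mul_assoc]

lemma card_filter_abs_sub_lt_le (s : Finset ℕ) (x : ℝ) {a : ℝ} (ha : 0 ≤ a) :
    (#{k ∈ s | |((k : ℕ) : ℝ) - x| < a} : ℝ) ≤ 2 * a + 1 := by
  set F := {k ∈ s | |((k : ℕ) : ℝ) - x| < a}
  have hsub : F ⊆ Icc ⌈x - a⌉₊ ⌊x + a⌋₊ := fun k hk => by
    have := abs_lt.1 (mem_filter.1 hk).2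
    exact mem_Icc.2 ⟨Nat.ceil_le.2 (by linarith), Nat.le_floor (by linarith)⟩
  have hcard := (card_le_card hsub).trans_eq (Nat.card_Icc _ _)
  rcases F.eq_empty_or_nonempty with hF | ⟨k, hk⟩
  · rw [hF, card_empty, Nat.cast_zero]; linarith
  · have hxa : 0 ≤ x + a := by linarith [abs_lt.1 (mem_filter.1 hk).2, Nat.cast_nonneg (α := ℝ) k]
    have : (#F : ℝ) + ⌈x - a⌉₊ ≤ ⌊x + a⌋₊ + 1 := by
      exact_mod_cast (by have := card_pos.2 ⟨k, hk⟩; omega : #F + ⌈x - a⌉₊ ≤ ⌊x + a⌋₊ + 1)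
    linarith [Nat.le_ceil (x - a), Nat.floor_le hxa]

noncomputable def binomProb (n : ℕ) (θ : ℝ) (k : ℕ) : ℝ :=
  n.choose k * θ ^ k * (1 - θ) ^ (n - k)

section binomProb

variable {n k : ℕ} {θ : ℝ}

lemma binomProb_nonneg (hθ0 : 0 ≤ θ) (hθ1 : θ ≤ 1) (k : ℕ) : 0 ≤ binomProb n θ k := by
  have : 0 ≤ 1 - θ := by linarith
  unfold binomProb
  positivity

lemma binomProb_of_lt (h : n < k) : binomProb n θ k = 0 := by
  simp [binomProb, Nat.choose_eq_zero_of_lt h]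

variable (n θ)

lemma sum_binomProb : ∑ k ∈ range (n + 1), binomProb n θ k = 1 := by
  have h := (add_pow θ (1 - θ) n).symm
  rw [add_sub_cancel, one_pow] at h
  rw [← h]
  exact sum_congr rfl fun k _ => by unfold binomProb; ring

lemma succ_mul_binomProb_succ (k : ℕ) :
    ((k : ℝ) + 1) * binomProb (n + 1) θ (k + 1) = (n + 1) * θ * binomProb n θ k := by
  have h : ((n : ℝ) + 1) * n.choose k = (n + 1).choose (k + 1) * ((k : ℝ) + 1) := by
    exact_mod_cast Nat.add_one_mul_choose_eq n k
  simp only [binomProb, Nat.add_sub_add_right, pow_succ]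
  linear_combination θ ^ k * θ * (1 - θ) ^ (n - k) * h.symm

lemma sum_mul_binomProb : ∑ k ∈ range (n + 1), (k : ℝ) * binomProb n θ k = n * θ := by
  cases n with
  | zero => simp
  | succ n =>
    rw [sum_range_succ']
    simp [succ_mul_binomProb_succ, ← mul_sum, sum_binomProb]

lemma sum_mul_sub_one_mul_binomProb :
    ∑ k ∈ range (n + 1), (k : ℝ) * (k - 1) * binomProb n θ k = n * (n - 1) * θ ^ 2 := by
  cases n with
  | zero => simp
  | succ n =>
    rw [sum_range_succ']
    have h : ∀ k : ℕ, ((k + 1 : ℕ) : ℝ) * ((k + 1 : ℕ) - 1) * binomProb (n + 1) θ (k + 1)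
        = (n + 1) * θ * (k * binomProb n θ k) := fun k => by
      push_cast
      linear_combination (k : ℝ) * succ_mul_binomProb_succ n θ k
    simp only [h, ← mul_sum, sum_mul_binomProb]
    push_cast
    ring

lemma sum_sq_sub_mul_binomProb :
    ∑ k ∈ range (n + 1), ((k : ℝ) - n * θ) ^ 2 * binomProb n θ k = n * θ * (1 - θ) := by
  have h₁ := sum_binomProb n θ
  have h₂ := sum_mul_binomProb n θ
  have h₃ := sum_mul_sub_one_mul_binomProb n θ
  have expand : ∀ k : ℕ, ((k : ℝ) - n * θ) ^ 2 * binomProb n θ k =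
      (k : ℝ) * (k - 1) * binomProb n θ k + (1 - 2 * n * θ) * ((k : ℝ) * binomProb n θ k)
        + (n * θ) ^ 2 * binomProb n θ k := fun k => by
    ring
  simp only [expand, sum_add_distrib, ← mul_sum, h₁, h₂, h₃]
  ring

variable {n θ}

lemma binomProb_succ_mul (hk : k < n) :
    binomProb n θ (k + 1) * ((k + 1) * (1 - θ)) = binomProb n θ k * ((n - k) * θ) := by
  have h : ((n.choose (k + 1) : ℕ) : ℝ) * ((k : ℝ) + 1) = n.choose k * ((n : ℝ) - k) := by
    have := congrArg (Nat.cast (R := ℝ)) (Nat.choose_succ_right_eq n k)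
    push_cast [Nat.cast_sub hk.le] at this
    exact this
  unfold binomProb
  rw [show n - k = n - (k + 1) + 1 by omega, pow_succ, pow_succ]
  linear_combination θ ^ k * θ * (1 - θ) ^ (n - (k + 1)) * (1 - θ) * h

lemma binomProb_le_mul_succ (hθ0 : 0 ≤ θ) (hθ1 : θ < 1) (hk : k < n) {c : ℝ}
    (h : (k + 1) * (1 - θ) ≤ c * ((n - k) * θ)) :
    binomProb n θ k ≤ c * binomProb n θ (k + 1) := by
  have hpos : 0 < ((k : ℝ) + 1) * (1 - θ) := by nlinarith
  refine le_of_mul_le_mul_right ?_ hpos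
  calc binomProb n θ k * ((k + 1) * (1 - θ))
      ≤ binomProb n θ k * (c * ((n - k) * θ)) :=
        mul_le_mul_of_nonneg_left h (binomProb_nonneg hθ0 hθ1.le k)
    _ = c * binomProb n θ (k + 1) * ((k + 1) * (1 - θ)) := by
        rw [mul_assoc c, binomProb_succ_mul hk]; ring

lemma binomProb_succ_le (hθ0 : 0 ≤ θ) (hθ1 : θ < 1) (h : ((n : ℝ) + 1) * θ ≤ k + 1) :
    binomProb n θ (k + 1) ≤ binomProb n θ k := by
  rcases lt_or_ge k n with hk | hk
  · have hpos : 0 < ((k : ℝ) + 1) * (1 - θ) := by nlinarith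
    refine le_of_mul_le_mul_right ?_ hpos
    rw [binomProb_succ_mul hk]
    exact mul_le_mul_of_nonneg_left (by nlinarith) (binomProb_nonneg hθ0 hθ1.le k)
  · rw [binomProb_of_lt (by omega)]
    exact binomProb_nonneg hθ0 hθ1.le k

end binomProb

noncomputable def binomMode (n : ℕ) (θ : ℝ) : ℕ := ⌊((n : ℝ) + 1) * θ⌋₊

section binomMode

variable {n : ℕ} {θ : ℝ}

lemma lt_binomMode_add_one : ((n : ℝ) + 1) * θ < binomMode n θ + 1 := Nat.lt_floor_add_one _

lemma binomMode_le (hθ0 : 0 ≤ θ) : (binomMode n θ : ℝ) ≤ ((n : ℝ) + 1) * θ :=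
  Nat.floor_le (by positivity)

lemma binomMode_le_ceil (hθ1 : θ < 1) : binomMode n θ ≤ ⌈n * θ⌉₊ :=
  Nat.lt_succ_iff.1 <| (Nat.floor_lt' (by omega)).2 <| by
    push_cast
    linarith [Nat.le_ceil ((n : ℝ) * θ)]

lemma binomProb_monotoneOn (hθ0 : 0 ≤ θ) (hθ1 : θ < 1) :
    MonotoneOn (binomProb n θ) (Set.Iic (binomMode n θ)) := fun k _ l hl hkl => by
  have hl' : (l : ℝ) ≤ (n + 1) * θ := (Nat.cast_le.2 hl).trans (binomMode_le hθ0)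
  simpa using le_pow_sub_mul_of_le_mul_succ (f := binomProb n θ) zero_le_one hkl fun j _ hjl => by
    have hj : (j : ℝ) + 1 ≤ l := by exact_mod_cast hjl
    have hjn : j < n := by
      have : (j : ℝ) < n := by nlinarith
      exact_mod_cast this
    simpa using binomProb_le_mul_succ hθ0 hθ1 hjn (c := 1) (by nlinarith)

lemma binomProb_antitoneOn (hθ0 : 0 ≤ θ) (hθ1 : θ < 1) :
    AntitoneOn (binomProb n θ) (Set.Ici (binomMode n θ)) :=
  antitoneOn_nat_Ici_of_succ_le fun j hj => binomProb_succ_le hθ0 hθ1 <| by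
    have hj' : (binomMode n θ : ℝ) ≤ j := by exact_mod_cast hj
    linarith [lt_binomMode_add_one (n := n) (θ := θ)]

lemma binomProb_le_binomMode (hθ0 : 0 ≤ θ) (hθ1 : θ < 1) (k : ℕ) :
    binomProb n θ k ≤ binomProb n θ (binomMode n θ) := by
  rcases le_total k (binomMode n θ) with hk | hk
  · exact binomProb_monotoneOn hθ0 hθ1 hk (Set.mem_Iic.2 le_rfl) hk
  · exact binomProb_antitoneOn hθ0 hθ1 (Set.mem_Ici.2 le_rfl) hk hk

lemma natCast_sub_mul_binomProb_le_sum_Icc (hθ0 : 0 ≤ θ) (hθ1 : θ < 1) {m M : ℕ}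
    (hm : binomMode n θ ≤ m) (hMn : M ≤ n) :
    ((M + 1 - m : ℕ) : ℝ) * binomProb n θ M ≤ ∑ k ∈ Icc m n, binomProb n θ k := by
  calc ((M + 1 - m : ℕ) : ℝ) * binomProb n θ M = ∑ k ∈ Icc m M, binomProb n θ M := by
        rw [sum_const, Nat.card_Icc, nsmul_eq_mul]
    _ ≤ ∑ k ∈ Icc m M, binomProb n θ k := sum_le_sum fun k hk => by
        have := mem_Icc.1 hk
        exact binomProb_antitoneOn hθ0 hθ1 (Set.mem_Ici.2 (by omega)) (Set.mem_Ici.2 (by omega))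
          this.2
    _ ≤ ∑ k ∈ Icc m n, binomProb n θ k :=
        sum_le_sum_of_subset_of_nonneg (Icc_subset_Icc_right hMn) fun k _ _ =>
          binomProb_nonneg hθ0 hθ1.le k

end binomMode

lemma sum_binomProb_abs_sub_ge_le_div_sq {n : ℕ} {θ a : ℝ} (hθ0 : 0 ≤ θ) (hθ1 : θ ≤ 1)
    (ha : 0 < a) :
    ∑ k ∈ range (n + 1) with a ≤ |((k : ℕ) : ℝ) - n * θ|, binomProb n θ k ≤
      n * θ * (1 - θ) / a ^ 2 := by
  rw [le_div_iff₀ (by positivity), sum_mul, ← sum_sq_sub_mul_binomProb]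
  calc ∑ k ∈ range (n + 1) with a ≤ |((k : ℕ) : ℝ) - n * θ|, binomProb n θ k * a ^ 2
      ≤ ∑ k ∈ range (n + 1) with a ≤ |((k : ℕ) : ℝ) - n * θ|,
          ((k : ℝ) - n * θ) ^ 2 * binomProb n θ k :=
        sum_le_sum fun k hk => by
          have hak := (mem_filter.1 hk).2
          have : a ^ 2 ≤ ((k : ℝ) - n * θ) ^ 2 := by
            rw [← sq_abs ((k : ℝ) - n * θ)]; gcongr
          nlinarith [binomProb_nonneg (n := n) hθ0 hθ1 k]
    _ ≤ ∑ k ∈ range (n + 1), ((k : ℝ) - n * θ) ^ 2 * binomProb n θ k :=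
        sum_le_sum_of_subset_of_nonneg (filter_subset _ _) fun k _ _ =>
          mul_nonneg (sq_nonneg _) (binomProb_nonneg hθ0 hθ1 k)

lemma one_div_le_binomProb_binomMode {n : ℕ} {θ : ℝ} (hθ0 : 0 ≤ θ) (hθ1 : θ < 1)
    (hw : 1 ≤ n * θ) : 1 / (8 * √(n * θ)) ≤ binomProb n θ (binomMode n θ) := by
  set s := √(n * θ)
  have hs2 : s ^ 2 = n * θ := Real.sq_sqrt (by linarith)
  have hs : 1 ≤ s := Real.one_le_sqrt.2 hw
  have hfar := sum_binomProb_abs_sub_ge_le_div_sq (n := n) hθ0 hθ1.le (a := 3 * s) (by positivity)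
  have hnear : ∑ k ∈ range (n + 1) with |((k : ℕ) : ℝ) - n * θ| < 3 * s, binomProb n θ k
      ≤ #{k ∈ range (n + 1) | |((k : ℕ) : ℝ) - n * θ| < 3 * s} * binomProb n θ (binomMode n θ) := by
    exact (sum_le_card_nsmul _ _ _ fun k _ => binomProb_le_binomMode hθ0 hθ1 k).trans_eq
      (nsmul_eq_mul _ _)
  have hcard := card_filter_abs_sub_lt_le (range (n + 1)) (n * θ) (a := 3 * s) (by positivity)
  have htotal := sum_filter_add_sum_filter_not (range (n + 1))
    (fun k : ℕ => |((k : ℕ) : ℝ) - n * θ| < 3 * s) (binomProb n θ)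
  simp only [not_lt, sum_binomProb] at htotal
  have hfar' : n * θ * (1 - θ) / (3 * s) ^ 2 ≤ 1 / 9 := by
    rw [div_le_iff₀ (by positivity), mul_pow, hs2]; nlinarith
  have hmode := binomProb_nonneg (n := n) hθ0 hθ1.le (binomMode n θ)
  have hmass : 8 / 9 ≤ (6 * s + 1) * binomProb n θ (binomMode n θ) := by nlinarith
  rw [div_le_iff₀ (by positivity)]
  nlinarith

section Bernoulli

variable {n : ℕ} {θ : ℝ}

lemma sum_filter_pow_mul_pow_eq_sum_binomProb (m : ℕ) :
    ∑ A : Finset (Fin n) with m ≤ #A, θ ^ #A * (1 - θ) ^ (n - #A) =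
      ∑ k ∈ Icc m n, binomProb n θ k := by
  have h := sum_powerset_apply_card (x := (univ : Finset (Fin n)))
    fun k => if m ≤ k then θ ^ k * (1 - θ) ^ (n - k) else 0
  simp only [powerset_univ, card_univ, Fintype.card_fin, nsmul_eq_mul, mul_ite, mul_zero] at h
  rw [sum_filter, h, ← sum_filter]
  refine sum_congr (by ext k; simp; omega) fun k _ => by unfold binomProb; ring

lemma IsBernoulli.pi_indicator {μ : Measure ℝ} (hμ : IsBernoulli μ θ) (hθ0 : 0 ≤ θ)
    (hθ1 : θ ≤ 1) (A : Finset (Fin n)) :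
    Measure.pi (fun _ : Fin n => μ) {fun i => if i ∈ A then 1 else 0} =
      ENNReal.ofReal (θ ^ #A * (1 - θ) ^ (n - #A)) := by
  obtain ⟨hprob, h1, h0⟩ := hμ
  rw [Measure.pi_singleton, ENNReal.ofReal_mul (by positivity), ENNReal.ofReal_pow hθ0,
    ENNReal.ofReal_pow (by linarith)]
  simp [apply_ite (fun x : ℝ => μ {x}), h1, h0, prod_ite, filter_not, card_univ_sdiff]

lemma IsBernoulli.ofReal_sum_binomProb_le {μ : Measure ℝ} (hμ : IsBernoulli μ θ) (hθ0 : 0 ≤ θ)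
    (hθ1 : θ ≤ 1) (m : ℕ) {S : Set (Fin n → ℝ)}
    (hS : ∀ A : Finset (Fin n), m ≤ #A → (fun i => if i ∈ A then 1 else 0) ∈ S) :
    ENNReal.ofReal (∑ k ∈ Icc m n, binomProb n θ k) ≤ Measure.pi (fun _ : Fin n => μ) S := by
  have := hμ.1
  let indicator (A : Finset (Fin n)) : Fin n → ℝ := fun i => if i ∈ A then 1 else 0
  have hinj : Function.Injective indicator := fun A B hAB => by
    ext i
    have := congrFun hAB i
    by_cases hA : i ∈ A <;> by_cases hB : i ∈ B <;> simp_all [indicator]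
  calc ENNReal.ofReal (∑ k ∈ Icc m n, binomProb n θ k)
      = ∑ A : Finset (Fin n) with m ≤ #A, Measure.pi (fun _ : Fin n => μ) {indicator A} := by
        rw [← sum_filter_pow_mul_pow_eq_sum_binomProb,
          ENNReal.ofReal_sum_of_nonneg fun _ _ =>
            mul_nonneg (pow_nonneg hθ0 _) (pow_nonneg (sub_nonneg.2 hθ1) _)]
        exact sum_congr rfl fun A _ => (hμ.pi_indicator hθ0 hθ1 A).symm
    _ = Measure.pi (fun _ : Fin n => μ)
          ↑(({A | m ≤ #A} : Finset (Finset (Fin n))).image indicator) :=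
        (sum_image hinj.injOn).symm.trans sum_measure_singleton
    _ ≤ Measure.pi (fun _ : Fin n => μ) S := measure_mono fun y hy => by
        obtain ⟨A, hA, rfl⟩ := mem_image.1 hy
        exact hS A (mem_filter.1 hA).2

lemma euclNorm_mul_indicator (α : ℝ) (A : Finset (Fin n)) :
    euclNorm (fun i => α * if i ∈ A then 1 else 0) = |α| * √(#A : ℝ) := by
  simp [euclNorm, sum_ite_mem, Real.sqrt_sq_eq_abs, mul_comm]

end Bernoulli

section RatioBounds

variable {n j : ℕ} {θ : ℝ}

lemma succ_mul_one_sub_le_of_le_add {D : ℝ} (hθ0 : 0 ≤ θ) (hθ : θ ≤ 1 / 100) (hD0 : 0 ≤ D)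
    (hD : D ≤ n * θ) (hj : (j : ℝ) + 1 ≤ n * θ + D) :
    (j + 1) * (1 - θ) ≤ (1 + 2 * D / (n * θ)) * ((n - j) * θ) := by
  set w := (n : ℝ) * θ
  have hw : 0 < w := by linarith
  calc (j + 1) * (1 - θ) ≤ (w + D) * (1 - θ) := by gcongr; linarith
    _ ≤ (1 + 2 * D / w) * (w - (w + D) * θ) := by
        rw [show 1 + 2 * D / w = (w + 2 * D) / w by field_simp, div_mul_eq_mul_div,
          le_div_iff₀ hw]
        have : 0 ≤ w - 2 * w * θ - 2 * D * θ := by nlinarith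
        nlinarith [mul_nonneg hD0 this]
    _ ≤ (1 + 2 * D / w) * ((n - j) * θ) := by gcongr; nlinarith

lemma succ_mul_one_sub_le_of_le_mul {s u : ℝ} (hθ0 : 0 ≤ θ) (hs : 10 ≤ s)
    (hs2 : s ^ 2 = n * θ) (hsu : s ≤ 10 * u) (hj : (j : ℝ) + 1 ≤ (s + u) ^ 2 + s + 2)
    (hjn : 2 * j ≤ n) :
    (j + 1) * (1 - θ) ≤ (2 + u ^ 2 / (n * θ)) ^ 10 * ((n - j) * θ) := by
  have hw : 0 < (n : ℝ) * θ := by nlinarith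
  have hjn' : (n : ℝ) * θ / 2 ≤ (n - j) * θ := by
    have : (2 * j : ℝ) ≤ n := by exact_mod_cast hjn
    nlinarith
  set q := u ^ 2 / (n * θ)
  have hq : 0 ≤ q := by positivity
  have hqw : q * (n * θ) = u ^ 2 := div_mul_cancel₀ _ hw.ne'
  calc (j + 1) * (1 - θ) ≤ 2 ^ 8 * u ^ 2 := by nlinarith
    _ ≤ 2 ^ 9 * (2 + q) * (n * θ / 2) := by nlinarith
    _ ≤ (2 + q) ^ 9 * (2 + q) * (n * θ / 2) := by gcongr; linarith
    _ = (2 + q) ^ 10 * (n * θ / 2) := by ring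
    _ ≤ (2 + q) ^ 10 * ((n - j) * θ) := by gcongr

end RatioBounds

/-- Through `binomProb_le_mul_succ`, `c` bounds the ratio of consecutive binomial weights on the
way from the mode to `⌈(s + u)²⌉₊ + ⌈s⌉₊`, a path of at most `2su + u² + s + 3` steps. -/
lemma exists_step_ratio_bound {n : ℕ} {θ s u : ℝ} (hθ0 : 0 ≤ θ) (hθ : θ ≤ 1 / 100)
    (hs : 10 ≤ s) (hs2 : s ^ 2 = n * θ) (hu0 : 0 ≤ u) :
    ∃ c : ℝ, 0 ≤ c ∧
      (∀ j : ℕ, (j : ℝ) + 1 ≤ (s + u) ^ 2 + s + 2 → 2 * j ≤ n →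
        (j + 1) * (1 - θ) ≤ c * ((n - j) * θ)) ∧
      ∀ X : ℕ, (X : ℝ) ≤ 2 * s * u + u ^ 2 + s + 3 →
        c ^ X ≤ Real.exp (10 + 340 * Real.log (2 + u ^ 2 / (n * θ)) * u ^ 2) := by
  have hw : 0 < (n : ℝ) * θ := by nlinarith
  set q := u ^ 2 / (n * θ)
  have hq : 0 ≤ q := by positivity
  set L := Real.log (2 + q)
  have hL : 1 / 2 ≤ L := by
    have := Real.log_le_log (by norm_num) (by linarith : (2 : ℝ) ≤ 2 + q)
    linarith [Real.log_two_gt_d9]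
  rcases le_total (10 * u) s with hus | hsu
  · set D := 2 * s * u + u ^ 2 + s + 2
    have hD0 : 0 ≤ D := by positivity
    have hDw : D ≤ n * θ := by rw [← hs2]; nlinarith
    refine ⟨1 + 2 * D / (n * θ), by positivity, fun j hj _ =>
      succ_mul_one_sub_le_of_le_add hθ0 hθ hD0 hDw (by rw [← hs2]; linarith), fun X hX => ?_⟩
    have hDX : 2 * D / (n * θ) * X ≤ 10 + 20 * u ^ 2 := by
      have hD : D ≤ s * (2.1 * u + 1.2) := by nlinarith
      have hDD : 2 * D * (D + 1) ≤ 2 * (s * (2.1 * u + 1.2)) * (s * (2.1 * u + 1.3)) := by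
        gcongr; linarith
      have hP : 2 * (s * (2.1 * u + 1.2)) * (s * (2.1 * u + 1.3)) ≤ (10 + 20 * u ^ 2) * s ^ 2 := by
        nlinarith [mul_nonneg (sq_nonneg s) (sq_nonneg (u - 1 / 2)),
          mul_nonneg (sq_nonneg s) (sq_nonneg u)]
      rw [div_mul_eq_mul_div, div_le_iff₀ hw, ← hs2]
      nlinarith [mul_le_mul_of_nonneg_left hX (by positivity : (0 : ℝ) ≤ 2 * D)]
    calc (1 + 2 * D / (n * θ)) ^ X ≤ Real.exp (2 * D / (n * θ)) ^ X := by
          gcongr; linarith [Real.add_one_le_exp (2 * D / (n * θ))]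
      _ = Real.exp (2 * D / (n * θ) * X) := by rw [← Real.exp_nat_mul]; ring_nf
      _ ≤ Real.exp (10 + 340 * L * u ^ 2) := Real.exp_le_exp.2 (by nlinarith [sq_nonneg u])
  · refine ⟨(2 + q) ^ 10, by positivity, fun j hj hjn =>
      succ_mul_one_sub_le_of_le_mul hθ0 hs hs2 hsu hj hjn, fun X hX => ?_⟩
    have hX34 : (X : ℝ) ≤ 34 * u ^ 2 := by nlinarith
    have hexpL : Real.exp L = 2 + q := Real.exp_log (by positivity)
    calc ((2 + q) ^ 10) ^ X = Real.exp (10 * X * L) := by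
          rw [← hexpL, ← pow_mul, ← Real.exp_nat_mul]; push_cast; ring_nf
      _ ≤ Real.exp (10 + 340 * L * u ^ 2) :=
          Real.exp_le_exp.2 (by nlinarith [mul_le_mul_of_nonneg_left hX34 (by linarith : 0 ≤ L)])

lemma two_mul_sq_add_add_le {n : ℕ} {θ s u : ℝ} (hθ : θ ≤ 1 / 100) (hs : 10 ≤ s)
    (hs2 : s ^ 2 = n * θ) (hu0 : 0 ≤ u) (hun : u ≤ √n / 2) : 2 * ((s + u) ^ 2 + s + 2) ≤ n := by
  have hn2 : √(n : ℝ) ^ 2 = n := Real.sq_sqrt (Nat.cast_nonneg n)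
  have hn : 100 ≤ √(n : ℝ) := by nlinarith [Real.sqrt_nonneg (n : ℝ)]
  have hsn : s ≤ √(n : ℝ) / 10 := by nlinarith
  have hsu : (s + u) ^ 2 ≤ (0.6 * √(n : ℝ)) ^ 2 := by gcongr; linarith
  nlinarith

theorem exp_div_eight_le_sum_binomProb {n : ℕ} {θ u : ℝ} (hθ0 : 0 < θ) (hθ : θ ≤ 1 / 100)
    (hw : 100 ≤ n * θ) (hu0 : 0 ≤ u) (hun : u ≤ √n / 2) :
    Real.exp (-(10 + 340 * Real.log (2 + u ^ 2 / (n * θ)) * u ^ 2)) / 8 ≤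
      ∑ k ∈ Icc ⌈(√(n * θ) + u) ^ 2⌉₊ n, binomProb n θ k := by
  set s := √(n * θ)
  have hs2 : s ^ 2 = n * θ := Real.sq_sqrt (by linarith)
  have hs : 10 ≤ s := by nlinarith [Real.sqrt_nonneg (n * θ)]
  have hθ1 : θ < 1 := by linarith
  set m := ⌈(s + u) ^ 2⌉₊
  set M := m + ⌈s⌉₊
  set k₀ := binomMode n θ
  have hk₀ : (n : ℝ) * θ - 1 < k₀ := by linarith [lt_binomMode_add_one (n := n) (θ := θ)]
  have hk₀m : k₀ ≤ m := (binomMode_le_ceil hθ1).trans (Nat.ceil_mono (by nlinarith))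
  have hM : (M : ℝ) < (s + u) ^ 2 + s + 2 := by
    push_cast [M]
    linarith [Nat.ceil_lt_add_one (sq_nonneg (s + u)), Nat.ceil_lt_add_one (by linarith : 0 ≤ s)]
  have hMn : 2 * M ≤ n := by
    have : (2 * M : ℝ) ≤ n := by linarith [two_mul_sq_add_add_le hθ hs hs2 hu0 hun]
    exact_mod_cast this
  obtain ⟨c, hc0, hstep, hpow⟩ := exists_step_ratio_bound hθ0.le hθ hs hs2 hu0
  have hchain : binomProb n θ k₀ ≤ c ^ (M - k₀) * binomProb n θ M :=
    le_pow_sub_mul_of_le_mul_succ hc0 (hk₀m.trans (Nat.le_add_right _ _)) fun j _ hjM => by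
      have : (j : ℝ) + 1 ≤ M := by exact_mod_cast hjM
      exact binomProb_le_mul_succ hθ0.le hθ1 (by omega) (hstep j (by linarith) (by omega))
  have hX : ((M - k₀ : ℕ) : ℝ) ≤ 2 * s * u + u ^ 2 + s + 3 := by
    rw [Nat.cast_sub (by omega)]
    nlinarith
  have hM0 := binomProb_nonneg (n := n) hθ0.le hθ1.le M
  have hwindow : s * binomProb n θ M ≤ ∑ k ∈ Icc m n, binomProb n θ k := by
    refine le_trans ?_ (natCast_sub_mul_binomProb_le_sum_Icc (M := M) hθ0.le hθ1 hk₀m (by omega))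
    gcongr
    rw [show M + 1 - m = ⌈s⌉₊ + 1 by omega]
    push_cast
    linarith [Nat.le_ceil s]
  have hmode := one_div_le_binomProb_binomMode hθ0.le hθ1 (by linarith : 1 ≤ (n : ℝ) * θ)
  set E := 10 + 340 * Real.log (2 + u ^ 2 / (n * θ)) * u ^ 2
  have hcX : c ^ (M - k₀) * Real.exp (-E) ≤ 1 := by
    rw [Real.exp_neg, ← div_eq_mul_inv, div_le_one (Real.exp_pos _)]
    exact hpow _ hX
  calc Real.exp (-E) / 8 = s * (1 / (8 * s)) * Real.exp (-E) := by field_simp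
    _ ≤ s * binomProb n θ k₀ * Real.exp (-E) := by gcongr
    _ ≤ s * (c ^ (M - k₀) * binomProb n θ M) * Real.exp (-E) := by gcongr
    _ = s * binomProb n θ M * (c ^ (M - k₀) * Real.exp (-E)) := by ring
    _ ≤ s * binomProb n θ M := mul_le_of_le_one_right (mul_nonneg (by linarith) hM0) hcX
    _ ≤ ∑ k ∈ Icc m n, binomProb n θ k := hwindow

lemma inv_exp_mul_exp_le {x : ℝ} (hx : 0 ≤ x) :
    (Real.exp 400)⁻¹ * Real.exp (-(Real.exp 400 * x)) ≤ Real.exp (-(10 + 340 * x)) / 8 := by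
  have hC : 340 ≤ Real.exp 400 := by linarith [Real.add_one_le_exp 400]
  have h8 : 8 ≤ Real.exp 390 := by linarith [Real.add_one_le_exp 390]
  rw [← Real.exp_neg, ← Real.exp_add, le_div_iff₀ (by norm_num)]
  calc Real.exp (-400 + -(Real.exp 400 * x)) * 8
      ≤ Real.exp (-400 + -(340 * x)) * Real.exp 390 := by gcongr
    _ = Real.exp (-(10 + 340 * x)) := by rw [← Real.exp_add]; ring_nf

theorem uptail_norm_scaled_bernoulli_from_mean :
    ∃ cb C : ℝ, 0 < cb ∧ 1 < C ∧
    ∃ N : ℕ, ∀ n : ℕ, N ≤ n →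
      ∀ α : ℝ, 0 < α →
      ∀ θ : ℝ, 1 / (cb * n) ≤ θ → θ ≤ cb →
      ∀ μ : Measure ℝ, IsBernoulli μ θ →
      -- `X = (α Y₁, …, α Yₙ)` where `Y` is the identity on the i.i.d. Bernoulli
      -- product space
      ∀ t : ℝ, 0 ≤ t → t ≤ α * Real.sqrt n / 2 →
        ENNReal.ofReal (C⁻¹ * Real.exp
            (-(C * Real.log (2 + t ^ 2 / (θ * n * α ^ 2)) * t ^ 2 / α ^ 2))) ≤
          (Measure.pi fun _ : Fin n => μ)
            {y | α * Real.sqrt (θ * n) + t ≤ euclNorm (fun i => α * y i)} := by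
  refine ⟨1 / 100, Real.exp 400, by norm_num, Real.one_lt_exp_iff.2 (by norm_num), 1, ?_⟩
  intro n hn α hα θ hθl hθu μ hμ t ht0 htn
  have hn0 : (0 : ℝ) < n := by exact_mod_cast hn
  have hw : 100 ≤ n * θ := by
    rw [div_le_iff₀ (by positivity)] at hθl
    linarith
  have hθ0 : 0 < θ := by nlinarith
  set u := t / α
  have hun : u ≤ √n / 2 := by rw [div_le_iff₀ hα]; linarith
  have hL : Real.exp 400 * Real.log (2 + t ^ 2 / (θ * n * α ^ 2)) * t ^ 2 / α ^ 2 =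
      Real.exp 400 * (Real.log (2 + u ^ 2 / (n * θ)) * u ^ 2) := by
    simp only [u, div_pow]; ring_nf
  have hq : 0 ≤ u ^ 2 / (n * θ) := by positivity
  have hLnn : 0 ≤ Real.log (2 + u ^ 2 / (n * θ)) * u ^ 2 :=
    mul_nonneg (Real.log_nonneg (by linarith)) (sq_nonneg u)
  refine le_trans (ENNReal.ofReal_le_ofReal ?_) (hμ.ofReal_sum_binomProb_le hθ0.le (by linarith)
    ⌈(√(n * θ) + u) ^ 2⌉₊ fun A hA => ?_)
  · calc _ ≤ _ := by rw [hL, mul_assoc 340]; exact inv_exp_mul_exp_le hLnn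
      _ ≤ _ := exp_div_eight_le_sum_binomProb hθ0 hθu hw (by positivity) hun
  · have hA' : √(n * θ) + u ≤ √(#A : ℝ) :=
      Real.le_sqrt_of_sq_le ((Nat.le_ceil _).trans (by exact_mod_cast hA))
    simp only [Set.mem_ofPred_eq, euclNorm_mul_indicator, abs_of_pos hα, mul_comm θ]
    calc α * √(n * θ) + t = α * (√(n * θ) + u) := by simp only [u]; field_simp
      _ ≤ α * √(#A : ℝ) := by gcongr
end

section
/- Let n ≥ 1, let A be a non-empty subset of ℝ^n, and let x ∈ ℝ^n. Then dist^c(x,A) = dist(0, V(x,A)), where dist(0,·) is the Euclidean distance from the origin to the set V(x,A). Furthermore, if A is convex, then dist^c(x,A) = dist(x,A), the Euclidean distance from x to A. -/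
open MeasureTheory

/-- The modified convex distance:
`dist^c(x,A) = sup_{‖a‖₂ = 1} inf_{y ∈ A} ∑ i, a i * |x i - y i|`. -/
noncomputable def distc {n : ℕ} (x : Fin n → ℝ) (A : Set (Fin n → ℝ)) : ℝ :=
  ⨆ a : {a : Fin n → ℝ // euclNorm a = 1}, ⨅ y : A, ∑ i, a.1 i * |x i - (y : Fin n → ℝ) i|

/-- `U(x,A)`: the set of vectors `(|x i - y i|)_i` for `y ∈ A`. -/
def Uset {n : ℕ} (x : Fin n → ℝ) (A : Set (Fin n → ℝ)) : Set (Fin n → ℝ) :=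
  {u | ∃ y ∈ A, u = fun i => |x i - y i|}

/-- `V(x,A)`: the convex hull of `U(x,A)`. -/
noncomputable def Vset {n : ℕ} (x : Fin n → ℝ) (A : Set (Fin n → ℝ)) : Set (Fin n → ℝ) :=
  convexHull ℝ (Uset x A)


/-! For a unit vector `a`, `∑ i, a i * |x i - y i|` is `⟪a, u⟫` with `u = |x - y| ∈ U(x,A)`, and a
lower bound for `⟪a, ·⟫` on `U(x,A)` persists on the convex hull `V(x,A)`; by Cauchy–Schwarz each
such bound is at most the distance `d` from `0` to `V(x,A)`. Conversely, if `d > 0`, the unit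
vector pointing to the nearest point of `closure V(x,A)` to `0` gives `⟪a, v⟫ ≥ d` on `V(x,A)`;
if `d = 0`, a coordinate vector gives the lower bound `0`, as `U(x,A)` lies in the nonnegative
orthant.

For convex `A`, the vectors dominating some `|x - y|` (`y ∈ A`) coordinatewise form a convex set
containing `U(x,A)`, so each point of `V(x,A)` dominates some `|x - y|` and is at least as long
as `x - y`. -/

open Metric
open scoped RealInnerProductSpace

section InnerProductSpace

variable {E : Type*} [NormedAddCommGroup E] [InnerProductSpace ℝ E]

lemma exists_norm_eq_one_infDist_le_inner [CompleteSpace E] {K : Set E} (hK : Convex ℝ K)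
    (hd : 0 < infDist 0 K) : ∃ a : E, ‖a‖ = 1 ∧ ∀ w ∈ K, infDist 0 K ≤ ⟪a, w⟫ := by
  have hne : (closure K).Nonempty :=
    closure_nonempty_iff.2 (Set.nonempty_iff_ne_empty.2 fun h => by simp [h] at hd)
  obtain ⟨p, hpK, hpmin⟩ :=
    exists_norm_eq_iInf_of_complete_convex hne isClosed_closure.isComplete hK.closure 0
  have hp : ‖p‖ = infDist 0 K := by
    rw [← infDist_closure, infDist_eq_iInf, ← norm_neg, ← zero_sub, hpmin]
    simp only [dist_eq_norm]
  have hp0 : 0 < ‖p‖ := hp ▸ hd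
  have hproj := (norm_eq_iInf_iff_real_inner_le_zero hK.closure hpK).1 hpmin
  refine ⟨‖p‖⁻¹ • p, norm_smul_inv_norm (norm_pos_iff.1 hp0), fun w hw => ?_⟩
  have hpw : ‖p‖ ^ 2 ≤ ⟪p, w⟫ := by
    have := hproj w (subset_closure hw)
    rw [zero_sub, inner_neg_left, inner_sub_right, real_inner_self_eq_norm_sq] at this
    linarith
  rwa [← hp, real_inner_smul_left, le_inv_mul_iff₀ hp0, ← sq]

end InnerProductSpace

section EuclideanNorm

variable {n : ℕ}

lemma euclNorm_nonneg (x : Fin n → ℝ) : 0 ≤ euclNorm x := Real.sqrt_nonneg _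

lemma bddBelow_range_euclNorm {ι : Type*} (f : ι → Fin n → ℝ) :
    BddBelow (Set.range fun i => euclNorm (f i)) :=
  ⟨0, Set.forall_mem_range.2 fun _ => euclNorm_nonneg _⟩

@[simp] lemma euclNorm_neg (x : Fin n → ℝ) : euclNorm (-x) = euclNorm x := by
  simp [euclNorm]

lemma euclNorm_abs (x : Fin n → ℝ) : euclNorm (fun i => |x i|) = euclNorm x := by
  simp [euclNorm]

lemma euclNorm_single (i : Fin n) : euclNorm (Pi.single i 1) = 1 := by
  simp [euclNorm, Pi.single_apply]

lemma euclNorm_le_euclNorm {x v : Fin n → ℝ} (h : ∀ i, |x i| ≤ v i) :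
    euclNorm x ≤ euclNorm v :=
  Real.sqrt_le_sqrt <| Finset.sum_le_sum fun i _ => sq_le_sq.2 <| (h i).trans (le_abs_self _)

lemma euclNorm_eq_norm_toLp (x : Fin n → ℝ) :
    euclNorm x = ‖(WithLp.toLp 2 x : EuclideanSpace ℝ (Fin n))‖ := by
  simp [euclNorm, EuclideanSpace.norm_eq]

lemma sum_mul_le_euclNorm_mul_euclNorm (a v : Fin n → ℝ) :
    ∑ i, a i * v i ≤ euclNorm a * euclNorm v :=
  Real.sum_mul_le_sqrt_mul_sqrt _ _ _

lemma iInf_euclNorm_eq_infDist (S : Set (Fin n → ℝ)) :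
    ⨅ v : S, euclNorm (v : Fin n → ℝ) =
      infDist (0 : EuclideanSpace ℝ (Fin n)) (WithLp.ofLp ⁻¹' S) := by
  rw [infDist_eq_iInf]
  refine Equiv.iInf_congr (Equiv.subtypeEquiv (WithLp.equiv 2 (Fin n → ℝ)).symm
    fun _ => Iff.rfl) fun v => ?_
  rw [dist_zero_left, euclNorm_eq_norm_toLp]
  rfl

end EuclideanNorm

lemma inner_toLp_eq_sum_mul {ι : Type*} [Fintype ι] (a : EuclideanSpace ℝ ι) (u : ι → ℝ) :
    ⟪a, WithLp.toLp 2 u⟫ = ∑ i, a i * u i := by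
  simp [PiLp.inner_apply, mul_comm]

section ConvexDistance

variable {n : ℕ}

lemma abs_sub_mem_Vset {x y : Fin n → ℝ} {A : Set (Fin n → ℝ)} (hy : y ∈ A) :
    (fun i => |x i - y i|) ∈ Vset x A :=
  subset_convexHull ℝ _ ⟨y, hy, rfl⟩

lemma Vset_nonempty {A : Set (Fin n → ℝ)} (hA : A.Nonempty) (x : Fin n → ℝ) :
    (Vset x A).Nonempty :=
  let ⟨_, hy⟩ := hA; ⟨_, abs_sub_mem_Vset hy⟩

lemma iInf_sum_mul_abs_sub_le_iInf_euclNorm {a : Fin n → ℝ} (ha : euclNorm a = 1)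
    {A : Set (Fin n → ℝ)} (hA : A.Nonempty) (x : Fin n → ℝ) :
    ⨅ y : A, ∑ i, a i * |x i - (y : Fin n → ℝ) i| ≤
      ⨅ v : Vset x A, euclNorm (v : Fin n → ℝ) := by
  by_cases hb : BddBelow (Set.range fun y : A => ∑ i, a i * |x i - (y : Fin n → ℝ) i|)
  · have : Nonempty (Vset x A) := (Vset_nonempty hA x).to_subtype
    refine le_ciInf fun v => ?_
    have hv : ⨅ y : A, ∑ i, a i * |x i - (y : Fin n → ℝ) i| ≤ ∑ i, a i * v.1 i := by
      refine convexHull_min ?_ (convex_halfSpace_ge (dotProductBilin ℝ ℝ a).isLinear _) v.2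
      rintro _ ⟨y, hy, rfl⟩
      exact ciInf_le hb ⟨y, hy⟩
    calc _ ≤ ∑ i, a i * v.1 i := hv
      _ ≤ euclNorm a * euclNorm (v : Fin n → ℝ) := sum_mul_le_euclNorm_mul_euclNorm a v
      _ = euclNorm (v : Fin n → ℝ) := by rw [ha, one_mul]
  · rw [Real.iInf_of_not_bddBelow hb]
    exact Real.iInf_nonneg fun v => euclNorm_nonneg _

lemma exists_euclNorm_eq_one_iInf_euclNorm_le (hn : 1 ≤ n) (x : Fin n → ℝ)
    (A : Set (Fin n → ℝ)) : ∃ a : Fin n → ℝ, euclNorm a = 1 ∧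
      ∀ y ∈ A, ⨅ v : Vset x A, euclNorm (v : Fin n → ℝ) ≤ ∑ i, a i * |x i - y i| := by
  have hd0 : 0 ≤ ⨅ v : Vset x A, euclNorm (v : Fin n → ℝ) :=
    Real.iInf_nonneg fun v => euclNorm_nonneg _
  rcases hd0.eq_or_lt with hd | hd
  · refine ⟨Pi.single ⟨0, hn⟩ 1, euclNorm_single _, fun y _ => ?_⟩
    simp [← hd, Pi.single_apply]
  · rw [iInf_euclNorm_eq_infDist] at hd ⊢
    have hK : Convex ℝ (WithLp.ofLp ⁻¹' Vset x A : Set (EuclideanSpace ℝ (Fin n))) :=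
      (convex_convexHull ℝ _).linear_preimage (WithLp.linearEquiv 2 ℝ (Fin n → ℝ)).toLinearMap
    obtain ⟨a, ha, hle⟩ := exists_norm_eq_one_infDist_le_inner hK hd
    refine ⟨WithLp.ofLp a, (euclNorm_eq_norm_toLp _).trans ha, fun y hy => ?_⟩
    exact (hle _ (abs_sub_mem_Vset hy)).trans_eq (inner_toLp_eq_sum_mul a _)

theorem distc_eq_iInf_euclNorm_Vset (hn : 1 ≤ n) {A : Set (Fin n → ℝ)} (hA : A.Nonempty)
    (x : Fin n → ℝ) : distc x A = ⨅ v : Vset x A, euclNorm (v : Fin n → ℝ) := by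
  have : Nonempty A := hA.to_subtype
  obtain ⟨a, ha, hle⟩ := exists_euclNorm_eq_one_iInf_euclNorm_le hn x A
  have : Nonempty {a : Fin n → ℝ // euclNorm a = 1} := ⟨⟨a, ha⟩⟩
  have upper (b : {a : Fin n → ℝ // euclNorm a = 1}) :=
    iInf_sum_mul_abs_sub_le_iInf_euclNorm b.2 hA x
  refine le_antisymm (ciSup_le upper) ?_
  calc ⨅ v : Vset x A, euclNorm (v : Fin n → ℝ)
        ≤ ⨅ y : A, ∑ i, a i * |x i - (y : Fin n → ℝ) i| := le_ciInf fun y => hle y y.2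
    _ ≤ distc x A := le_ciSup ⟨_, Set.forall_mem_range.2 upper⟩ ⟨a, ha⟩

lemma convex_setOf_exists_abs_sub_le {ι : Type*} {A : Set (ι → ℝ)} (hA : Convex ℝ A)
    (x : ι → ℝ) : Convex ℝ {w : ι → ℝ | ∃ y ∈ A, ∀ i, |x i - y i| ≤ w i} := by
  rintro w₁ ⟨y₁, hy₁, h₁⟩ w₂ ⟨y₂, hy₂, h₂⟩ s t hs ht hst
  refine ⟨s • y₁ + t • y₂, hA hy₁ hy₂ hs ht hst, fun i => ?_⟩
  have hx : x i - (s • y₁ + t • y₂) i = s * (x i - y₁ i) + t * (x i - y₂ i) := by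
    simp only [Pi.add_apply, Pi.smul_apply, smul_eq_mul]
    linear_combination x i * hst.symm
  calc |x i - (s • y₁ + t • y₂) i| ≤ s * |x i - y₁ i| + t * |x i - y₂ i| := by
        rw [hx]
        refine (abs_add_le _ _).trans_eq ?_
        rw [abs_mul, abs_mul, abs_of_nonneg hs, abs_of_nonneg ht]
    _ ≤ s * w₁ i + t * w₂ i := by gcongr; exacts [h₁ i, h₂ i]
    _ = (s • w₁ + t • w₂) i := rfl

lemma exists_abs_sub_le_of_mem_Vset {A : Set (Fin n → ℝ)} (hA : Convex ℝ A) {x v : Fin n → ℝ}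
    (hv : v ∈ Vset x A) : ∃ y ∈ A, ∀ i, |x i - y i| ≤ v i := by
  refine convexHull_min ?_ (convex_setOf_exists_abs_sub_le hA x) hv
  rintro _ ⟨y, hy, rfl⟩
  exact ⟨y, hy, fun i => le_rfl⟩

lemma iInf_euclNorm_Vset_eq_of_convex {A : Set (Fin n → ℝ)} (hA : A.Nonempty)
    (hconv : Convex ℝ A) (x : Fin n → ℝ) :
    ⨅ v : Vset x A, euclNorm (v : Fin n → ℝ) = ⨅ y : A, euclNorm (x - (y : Fin n → ℝ)) := by
  have : Nonempty A := hA.to_subtype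
  have : Nonempty (Vset x A) := (Vset_nonempty hA x).to_subtype
  refine le_antisymm (le_ciInf fun y => ?_) (le_ciInf fun v => ?_)
  · exact (ciInf_le (bddBelow_range_euclNorm _) ⟨_, abs_sub_mem_Vset y.2⟩).trans_eq
      (euclNorm_abs (x - (y : Fin n → ℝ)))
  · obtain ⟨y, hy, hle⟩ := exists_abs_sub_le_of_mem_Vset hconv v.2
    exact (ciInf_le (bddBelow_range_euclNorm _) ⟨y, hy⟩).trans (euclNorm_le_euclNorm hle)

end ConvexDistance

theorem distc_eq_dist_convexHull {n : ℕ} (hn : 1 ≤ n) (A : Set (Fin n → ℝ))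
    (hA : A.Nonempty) (x : Fin n → ℝ) :
    -- dist^c(x,A) is the Euclidean distance from the origin to V(x,A)
    distc x A = ⨅ v : Vset x A, euclNorm ((0 : Fin n → ℝ) - (v : Fin n → ℝ)) ∧
    -- and if A is convex it is the Euclidean distance from x to A
    (Convex ℝ A → distc x A = ⨅ y : A, euclNorm (x - (y : Fin n → ℝ))) := by
  have hV := distc_eq_iInf_euclNorm_Vset hn hA x
  simp only [zero_sub, euclNorm_neg]
  exact ⟨hV, fun hconv => hV.trans (iInf_euclNorm_Vset_eq_of_convex hA hconv x)⟩
end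

section
/- Let n ≥ 1, let μ_1,…,μ_{n+1} be Borel probability measures on ℝ, let A ⊆ ℝ^{n+1} be non-empty, and for α ∈ ℝ set A(α) := {v ∈ ℝ^n : (v,α) ∈ A}. Let X = (X_1,…,X_{n+1}) be distributed according to μ_1 × ⋯ × μ_{n+1} and let X' = (X_1,…,X_n). Then for every κ > 0 and every finitely supported discrete probability measure ν on ℝ, one has 𝔼 exp( κ·(dist^c(X,A))² ) ≤ 𝔼 [ exp( κ·( ∫_ℝ |X_{n+1} − α| dν(α) )² ) · Π_{α ∈ supp(ν)} ( 𝔼_{X'} exp( κ·(dist^c(X', A(α)))² ) )^{ν({α})} ] (with the convention that dist^c(x,∅) = +∞, so that empty sections contribute an infinite factor unless ν avoids them). -/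
open MeasureTheory ENNReal

/-- The modified convex distance, valued in `ℝ≥0∞`:
`dist^c(x,A) = sup_{‖a‖₂ = 1} inf_{y ∈ A} ∑ i, a i * |x i - y i|`,
with the convention `dist^c(x,∅) = +∞`. -/
noncomputable def distcE {n : ℕ} (x : Fin n → ℝ) (A : Set (Fin n → ℝ)) : ℝ≥0∞ :=
  ⨆ a : {a : Fin n → ℝ // euclNorm a = 1},
    ⨅ y : A, ENNReal.ofReal (∑ i, a.1 i * |x i - (y : Fin n → ℝ) i|)

/-- Extension of `x ↦ exp x` to `ℝ≥0∞`, sending `∞` to `∞`. -/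
noncomputable def eexp (x : ℝ≥0∞) : ℝ≥0∞ :=
  if x = ⊤ then ⊤ else ENNReal.ofReal (Real.exp x.toReal)

lemma euclNorm_sq_eq {n : ℕ} {a : Fin n → ℝ} (h : euclNorm a = 1) : ∑ i, (a i) ^ 2 = 1 := by
  have h0 : (0:ℝ) ≤ ∑ i, (a i) ^ 2 := Finset.sum_nonneg fun i _ => sq_nonneg _
  have := congrArg (fun t : ℝ => t ^ 2) h
  simpa [euclNorm, Real.sq_sqrt h0] using this

lemma abs_le_one_of_unit {n : ℕ} {a : Fin n → ℝ} (h : euclNorm a = 1) (i : Fin n) :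
    |a i| ≤ 1 := by
  have h1 := euclNorm_sq_eq h
  have : (a i) ^ 2 ≤ 1 := by
    rw [← h1]
    exact Finset.single_le_sum (fun j _ => sq_nonneg (a j)) (Finset.mem_univ i)
  nlinarith [abs_nonneg (a i), sq_abs (a i)]

lemma distcE_le_of_mem {n : ℕ} (x : Fin n → ℝ) {B : Set (Fin n → ℝ)} {y₀ : Fin n → ℝ}
    (hy₀ : y₀ ∈ B) : distcE x B ≤ ENNReal.ofReal (∑ i, |x i - y₀ i|) := by
  refine iSup_le fun a => ?_
  refine le_trans (iInf_le _ (⟨y₀, hy₀⟩ : B)) ?_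
  refine ENNReal.ofReal_le_ofReal ?_
  refine Finset.sum_le_sum fun i _ => ?_
  calc a.1 i * |x i - y₀ i| ≤ |a.1 i| * |x i - y₀ i| :=
        mul_le_mul_of_nonneg_right (le_abs_self _) (abs_nonneg _)
    _ ≤ 1 * |x i - y₀ i| :=
        mul_le_mul_of_nonneg_right (abs_le_one_of_unit a.2 i) (abs_nonneg _)
    _ = |x i - y₀ i| := one_mul _

lemma distcE_ne_top {n : ℕ} (x : Fin n → ℝ) {B : Set (Fin n → ℝ)} (hB : B.Nonempty) :
    distcE x B ≠ ⊤ := by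
  obtain ⟨y₀, hy₀⟩ := hB
  exact ne_top_of_le_ne_top ENNReal.ofReal_ne_top (distcE_le_of_mem x hy₀)

lemma distcE_lip {n : ℕ} (x x' : Fin n → ℝ) (B : Set (Fin n → ℝ)) :
    distcE x B ≤ distcE x' B + ENNReal.ofReal (∑ i, |x i - x' i|) := by
  refine iSup_le fun a => ?_
  have key : ∀ y : B, ENNReal.ofReal (∑ i, a.1 i * |x i - (y : Fin n → ℝ) i|) ≤
      ENNReal.ofReal (∑ i, a.1 i * |x' i - (y : Fin n → ℝ) i|) +
        ENNReal.ofReal (∑ i, |x i - x' i|) := by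
    intro y
    refine le_trans (ENNReal.ofReal_le_ofReal ?_) ENNReal.ofReal_add_le
    rw [← Finset.sum_add_distrib]
    refine Finset.sum_le_sum fun i _ => ?_
    have h1 : |x i - (y:Fin n → ℝ) i| ≤ |x' i - (y:Fin n → ℝ) i| + |x i - x' i| := by
      have := abs_sub_abs_le_abs_sub (x i - (y:Fin n → ℝ) i) (x' i - (y:Fin n → ℝ) i)
      have h2 : |x i - (y:Fin n → ℝ) i - (x' i - (y:Fin n → ℝ) i)| = |x i - x' i| := by
        ring_nf
      rw [h2] at this; linarith
    have h1' : |x' i - (y:Fin n → ℝ) i| - |x i - (y:Fin n → ℝ) i| ≤ |x i - x' i| := by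
      have := abs_sub_abs_le_abs_sub (x' i - (y:Fin n → ℝ) i) (x i - (y:Fin n → ℝ) i)
      have h2 : |x' i - (y:Fin n → ℝ) i - (x i - (y:Fin n → ℝ) i)| = |x i - x' i| := by
        rw [abs_sub_comm]; ring_nf
      rw [h2] at this; linarith
    have haa := abs_le.mp (abs_le_one_of_unit a.2 i)
    rcases le_or_gt 0 (a.1 i) with hs | hs
    · nlinarith [abs_nonneg (x i - x' i)]
    · nlinarith [abs_nonneg (x i - x' i)]
  calc (⨅ y : B, ENNReal.ofReal (∑ i, a.1 i * |x i - (y : Fin n → ℝ) i|))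
      ≤ ⨅ y : B, (ENNReal.ofReal (∑ i, a.1 i * |x' i - (y : Fin n → ℝ) i|) +
          ENNReal.ofReal (∑ i, |x i - x' i|)) := iInf_mono key
    _ = (⨅ y : B, ENNReal.ofReal (∑ i, a.1 i * |x' i - (y : Fin n → ℝ) i|)) +
          ENNReal.ofReal (∑ i, |x i - x' i|) := (ENNReal.iInf_add).symm
    _ ≤ distcE x' B + ENNReal.ofReal (∑ i, |x i - x' i|) := by
        gcongr
        exact le_iSup (fun a : {a : Fin n → ℝ // euclNorm a = 1} =>
          ⨅ y : B, ENNReal.ofReal (∑ i, a.1 i * |x' i - (y : Fin n → ℝ) i|)) a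

lemma measurable_distcE {n : ℕ} (B : Set (Fin n → ℝ)) :
    Measurable (fun x : Fin n → ℝ => distcE x B) := by
  rcases B.eq_empty_or_nonempty with rfl | hB
  · have : (fun x : Fin n → ℝ => distcE x (∅ : Set (Fin n → ℝ))) =
        fun _ => ⨆ _ : {a : Fin n → ℝ // euclNorm a = 1}, (⊤ : ℝ≥0∞) := by
      funext x
      exact iSup_congr fun a => iInf_of_empty _
    rw [this]; exact measurable_const
  · set g : (Fin n → ℝ) → ℝ := fun x => (distcE x B).toReal with hg
    have hlip : LipschitzWith n g := by
      apply LipschitzWith.of_dist_le_mul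
      intro x x'
      have key : ∀ u v : Fin n → ℝ, g u - g v ≤ n * dist u v := by
        intro u v
        have h1 := distcE_lip u v B
        have h2 : (distcE u B).toReal ≤ (distcE v B).toReal + ∑ i, |u i - v i| := by
          have hne : distcE v B + ENNReal.ofReal (∑ i, |u i - v i|) ≠ ⊤ :=
            ENNReal.add_ne_top.mpr ⟨distcE_ne_top v hB, ENNReal.ofReal_ne_top⟩
          have := ENNReal.toReal_mono hne h1
          rwa [ENNReal.toReal_add (distcE_ne_top v hB) ENNReal.ofReal_ne_top,
            ENNReal.toReal_ofReal (Finset.sum_nonneg fun i _ => abs_nonneg _)] at this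
        have h3 : ∑ i, |u i - v i| ≤ n * dist u v := by
          calc ∑ i, |u i - v i| ≤ ∑ _i : Fin n, dist u v := by
                refine Finset.sum_le_sum fun i _ => ?_
                have := dist_le_pi_dist u v i
                simpa [Real.dist_eq] using this
            _ = n * dist u v := by simp [Finset.sum_const, nsmul_eq_mul]
        simp only [hg]; linarith
      rw [Real.dist_eq, abs_sub_le_iff]
      constructor
      · exact key x x'
      · calc g x' - g x ≤ n * dist x' x := key x' x
          _ = n * dist x x' := by rw [dist_comm]
    have : (fun x : Fin n → ℝ => distcE x B) = fun x => ENNReal.ofReal (g x) := by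
      funext x
      rw [hg]
      exact (ENNReal.ofReal_toReal (distcE_ne_top x hB)).symm
    rw [this]
    exact ENNReal.measurable_ofReal.comp hlip.continuous.measurable

lemma measurable_eexp : Measurable eexp := by
  have : eexp = fun x : ℝ≥0∞ =>
      Set.piecewise {x : ℝ≥0∞ | x = ⊤} (fun _ => (⊤:ℝ≥0∞))
        (fun x => ENNReal.ofReal (Real.exp x.toReal)) x := by
    funext x
    by_cases h : x = ⊤ <;> simp [eexp, h, Set.piecewise]
  rw [this]
  refine Measurable.piecewise ?_ measurable_const ?_
  · have : {x : ℝ≥0∞ | x = ⊤} = {⊤} := by ext; simp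
    rw [this]; exact measurableSet_singleton _
  · exact ENNReal.measurable_ofReal.comp (Real.measurable_exp.comp ENNReal.measurable_toReal)

lemma one_le_eexp (x : ℝ≥0∞) : 1 ≤ eexp x := by
  by_cases h : x = ⊤
  · simp [eexp, h]
  · simp only [eexp, h, if_false]
    rw [← ENNReal.ofReal_one]
    exact ENNReal.ofReal_le_ofReal (by simpa using Real.one_le_exp ENNReal.toReal_nonneg)

lemma eexp_pos (x : ℝ≥0∞) : eexp x ≠ 0 := by
  have := one_le_eexp x
  intro h; rw [h] at this; simp at this

lemma eexp_mono : Monotone eexp := by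
  intro x y hxy
  by_cases hy : y = ⊤
  · simp [eexp, hy]
  · have hx : x ≠ ⊤ := fun h => hy (top_le_iff.mp (h ▸ hxy))
    simp only [eexp, hx, hy, if_false]
    exact ENNReal.ofReal_le_ofReal (Real.exp_le_exp.mpr (ENNReal.toReal_mono hy hxy))

lemma eexp_ofReal {r : ℝ} (hr : 0 ≤ r) : eexp (ENNReal.ofReal r) = ENNReal.ofReal (Real.exp r) := by
  simp [eexp, ENNReal.ofReal_ne_top, ENNReal.toReal_ofReal hr]

lemma key_geom {n : ℕ} (x : Fin (n+1) → ℝ) (A : Set (Fin (n+1) → ℝ))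
    (S : Finset ℝ) (w : ℝ → ℝ) (hw : ∀ α ∈ S, 0 ≤ w α) (hw1 : ∑ α ∈ S, w α = 1)
    (hsec : ∀ α ∈ S, 0 < w α → {u : Fin n → ℝ | Fin.snoc u α ∈ A}.Nonempty) :
    distcE x A ≤ ENNReal.ofReal (Real.sqrt
      ((∑ α ∈ S, w α * |x (Fin.last n) - α|) ^ 2 +
       (∑ α ∈ S, w α * (distcE (fun i => x i.castSucc)
          {u : Fin n → ℝ | Fin.snoc u α ∈ A}).toReal) ^ 2)) := by
  classical
  set x' : Fin n → ℝ := fun i => x i.castSucc with hx'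
  set ω : ℝ := x (Fin.last n) with hω
  set Aa : ℝ → Set (Fin n → ℝ) := fun α => {u : Fin n → ℝ | Fin.snoc u α ∈ A} with hAa
  set d : ℝ → ℝ := fun α => (distcE x' (Aa α)).toReal with hd
  set M : ℝ := ∑ α ∈ S, w α * |ω - α| with hM
  set D : ℝ := ∑ α ∈ S, w α * d α with hD
  have hDnn : 0 ≤ D := Finset.sum_nonneg fun α hα =>
    mul_nonneg (hw α hα) ENNReal.toReal_nonneg
  have hMnn : 0 ≤ M := Finset.sum_nonneg fun α hα =>
    mul_nonneg (hw α hα) (abs_nonneg _)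
  refine iSup_le fun a => ?_
  set b : Fin n → ℝ := fun i => a.1 i.castSucc with hb
  set t : ℝ := a.1 (Fin.last n) with ht
  set N : ℝ := euclNorm b with hN
  have hNnn : 0 ≤ N := Real.sqrt_nonneg _
  have hNsq : N ^ 2 = ∑ i, b i ^ 2 :=
    Real.sq_sqrt (Finset.sum_nonneg fun i _ => sq_nonneg _)
  have hNt : N ^ 2 + t ^ 2 = 1 := by
    have := euclNorm_sq_eq a.2
    rw [Fin.sum_univ_castSucc] at this
    rw [hNsq]; exact this
  -- per-α bound
  have hstep : ∀ α ∈ S, 0 < w α →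
      (⨅ y : A, ENNReal.ofReal (∑ i, a.1 i * |x i - (y : Fin (n+1) → ℝ) i|)) ≤
      ENNReal.ofReal (N * d α + max t 0 * |ω - α|) := by
    intro α hα hwα
    obtain ⟨y₀, hy₀⟩ := hsec α hα hwα
    have hsum : ∀ y' : Fin n → ℝ,
        (∑ i, a.1 i * |x i - (Fin.snoc y' α : Fin (n+1) → ℝ) i|) =
          (∑ i, b i * |x' i - y' i|) + t * |ω - α| := by
      intro y'
      rw [Fin.sum_univ_castSucc]
      simp [hb, ht, hx', hω]
    have h1 : (⨅ y : A, ENNReal.ofReal (∑ i, a.1 i * |x i - (y : Fin (n+1) → ℝ) i|)) ≤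
        ⨅ y' : Aa α, ENNReal.ofReal ((∑ i, b i * |x' i - (y' : Fin n → ℝ) i|) + t * |ω - α|) := by
      refine le_iInf fun y' => ?_
      refine iInf_le_of_le ⟨Fin.snoc y'.1 α, y'.2⟩ ?_
      rw [hsum y'.1]
    have h2 : (⨅ y' : Aa α, ENNReal.ofReal ((∑ i, b i * |x' i - (y' : Fin n → ℝ) i|) + t * |ω - α|)) ≤
        (⨅ y' : Aa α, ENNReal.ofReal (∑ i, b i * |x' i - (y' : Fin n → ℝ) i|)) +
          ENNReal.ofReal (max t 0 * |ω - α|) := by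
      rw [ENNReal.iInf_add]
      refine iInf_mono fun y' => ?_
      refine le_trans (ENNReal.ofReal_le_ofReal ?_) ENNReal.ofReal_add_le
      have : t * |ω - α| ≤ max t 0 * |ω - α| :=
        mul_le_mul_of_nonneg_right (le_max_left _ _) (abs_nonneg _)
      linarith
    have h3 : (⨅ y' : Aa α, ENNReal.ofReal (∑ i, b i * |x' i - (y' : Fin n → ℝ) i|)) ≤
        ENNReal.ofReal (N * d α) := by
      by_cases hN0 : N = 0
      · have hb0 : ∀ i, b i = 0 := by
          intro i
          have hsum0 : ∑ i, b i ^ 2 = 0 := by rw [← hNsq, hN0]; ring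
          have := (Finset.sum_eq_zero_iff_of_nonneg
            (fun i _ => sq_nonneg (b i))).mp hsum0 i (Finset.mem_univ i)
          exact pow_eq_zero_iff (n := 2) (by norm_num) |>.mp this
        refine le_trans (iInf_le _ (⟨y₀, hy₀⟩ : Aa α)) ?_
        have : (∑ i, b i * |x' i - y₀ i|) = 0 :=
          Finset.sum_eq_zero fun i _ => by rw [hb0 i, zero_mul]
        rw [this]
        simp
      · have hNpos : 0 < N := lt_of_le_of_ne hNnn (Ne.symm hN0)
        set u : Fin n → ℝ := fun i => b i / N with hu
        have huu : euclNorm u = 1 := by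
          have : ∑ i, u i ^ 2 = 1 := by
            simp only [hu, div_pow]
            rw [← Finset.sum_div, ← hNsq]
            field_simp
          rw [euclNorm, this, Real.sqrt_one]
        have hbu : ∀ i, b i = N * u i := by
          intro i; rw [hu]; field_simp
        have hrw : ∀ y' : Aa α, ENNReal.ofReal (∑ i, b i * |x' i - (y' : Fin n → ℝ) i|) =
            ENNReal.ofReal N * ENNReal.ofReal (∑ i, u i * |x' i - (y' : Fin n → ℝ) i|) := by
          intro y'
          rw [← ENNReal.ofReal_mul hNnn, Finset.mul_sum]
          congr 1
          exact Finset.sum_congr rfl fun i _ => by rw [hbu i]; ring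
        calc (⨅ y' : Aa α, ENNReal.ofReal (∑ i, b i * |x' i - (y' : Fin n → ℝ) i|))
            = ⨅ y' : Aa α, ENNReal.ofReal N *
                ENNReal.ofReal (∑ i, u i * |x' i - (y' : Fin n → ℝ) i|) :=
              iInf_congr hrw
          _ = ENNReal.ofReal N *
                ⨅ y' : Aa α, ENNReal.ofReal (∑ i, u i * |x' i - (y' : Fin n → ℝ) i|) := by
              refine (ENNReal.mul_iInf' ?_ ?_).symm
              · intro h; exact absurd h ENNReal.ofReal_ne_top
              · intro _; exact ⟨⟨y₀, hy₀⟩⟩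
          _ ≤ ENNReal.ofReal N * distcE x' (Aa α) := by
              gcongr
              exact le_iSup (fun c : {c : Fin n → ℝ // euclNorm c = 1} =>
                ⨅ y' : Aa α, ENNReal.ofReal (∑ i, c.1 i * |x' i - (y' : Fin n → ℝ) i|))
                ⟨u, huu⟩
          _ = ENNReal.ofReal (N * d α) := by
              rw [ENNReal.ofReal_mul hNnn, hd]
              congr 1
              exact (ENNReal.ofReal_toReal (distcE_ne_top x' ⟨y₀, hy₀⟩)).symm
    calc (⨅ y : A, ENNReal.ofReal (∑ i, a.1 i * |x i - (y : Fin (n+1) → ℝ) i|))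
        ≤ _ := h1
      _ ≤ _ := h2
      _ ≤ ENNReal.ofReal (N * d α) + ENNReal.ofReal (max t 0 * |ω - α|) := by gcongr
      _ = ENNReal.ofReal (N * d α + max t 0 * |ω - α|) :=
          (ENNReal.ofReal_add (mul_nonneg hNnn ENNReal.toReal_nonneg)
            (mul_nonneg (le_max_right _ _) (abs_nonneg _))).symm
  -- convex combination
  have hconv : (⨅ y : A, ENNReal.ofReal (∑ i, a.1 i * |x i - (y : Fin (n+1) → ℝ) i|)) ≤
      ENNReal.ofReal (∑ α ∈ S, w α * (N * d α + max t 0 * |ω - α|)) := by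
    set c := ⨅ y : A, ENNReal.ofReal (∑ i, a.1 i * |x i - (y : Fin (n+1) → ℝ) i|)
    have hone : (∑ α ∈ S, ENNReal.ofReal (w α)) = 1 := by
      rw [← ENNReal.ofReal_sum_of_nonneg hw, hw1, ENNReal.ofReal_one]
    calc c = (∑ α ∈ S, ENNReal.ofReal (w α)) * c := by rw [hone, one_mul]
      _ = ∑ α ∈ S, ENNReal.ofReal (w α) * c := Finset.sum_mul _ _ _
      _ ≤ ∑ α ∈ S, ENNReal.ofReal (w α) * ENNReal.ofReal (N * d α + max t 0 * |ω - α|) := by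
          refine Finset.sum_le_sum fun α hα => ?_
          rcases eq_or_lt_of_le (hw α hα) with h0 | hpos
          · rw [← h0]; simp
          · exact mul_le_mul_right (hstep α hα hpos) _
      _ = ∑ α ∈ S, ENNReal.ofReal (w α * (N * d α + max t 0 * |ω - α|)) := by
          refine Finset.sum_congr rfl fun α hα => ?_
          rw [ENNReal.ofReal_mul (hw α hα)]
      _ = ENNReal.ofReal (∑ α ∈ S, w α * (N * d α + max t 0 * |ω - α|)) := by
          rw [ENNReal.ofReal_sum_of_nonneg]
          intro α hα
          exact mul_nonneg (hw α hα) (add_nonneg (mul_nonneg hNnn ENNReal.toReal_nonneg)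
            (mul_nonneg (le_max_right _ _) (abs_nonneg _)))
  refine hconv.trans (ENNReal.ofReal_le_ofReal ?_)
  have hexp : (∑ α ∈ S, w α * (N * d α + max t 0 * |ω - α|)) = N * D + max t 0 * M := by
    rw [hD, hM, Finset.mul_sum, Finset.mul_sum, ← Finset.sum_add_distrib]
    exact Finset.sum_congr rfl fun α hα => by ring
  rw [hexp]
  refine Real.le_sqrt_of_sq_le ?_
  have htp : 0 ≤ max t 0 := le_max_right _ _
  have htp2 : (max t 0) ^ 2 ≤ t ^ 2 := by
    rcases le_or_gt t 0 with h | h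
    · rw [max_eq_right h]; simpa using sq_nonneg t
    · rw [max_eq_left h.le]
  nlinarith [sq_nonneg (N * M - max t 0 * D), sq_nonneg N, mul_nonneg hNnn hDnn,
    mul_nonneg htp hMnn, sq_nonneg D, sq_nonneg M]

lemma key_pointwise {n : ℕ} (x : Fin (n+1) → ℝ) (A : Set (Fin (n+1) → ℝ))
    {κ : ℝ} (hκ : 0 < κ)
    (S : Finset ℝ) (w : ℝ → ℝ) (hw : ∀ α ∈ S, 0 ≤ w α) (hw1 : ∑ α ∈ S, w α = 1)
    (hsec : ∀ α ∈ S, 0 < w α → {u : Fin n → ℝ | Fin.snoc u α ∈ A}.Nonempty) :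
    eexp (ENNReal.ofReal κ * distcE x A ^ 2) ≤
      ENNReal.ofReal (Real.exp (κ * (∑ α ∈ S, w α * |x (Fin.last n) - α|) ^ 2)) *
        ∏ α ∈ S, (eexp (ENNReal.ofReal κ *
          distcE (fun i => x i.castSucc) {u : Fin n → ℝ | Fin.snoc u α ∈ A} ^ 2)) ^ w α := by
  classical
  set x' : Fin n → ℝ := fun i => x i.castSucc with hx'
  set d : ℝ → ℝ := fun α =>
    (distcE x' {u : Fin n → ℝ | Fin.snoc u α ∈ A}).toReal with hd
  set M : ℝ := ∑ α ∈ S, w α * |x (Fin.last n) - α| with hM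
  set D : ℝ := ∑ α ∈ S, w α * d α with hD
  have hDnn : 0 ≤ D := Finset.sum_nonneg fun α hα =>
    mul_nonneg (hw α hα) ENNReal.toReal_nonneg
  set r : ℝ := Real.sqrt (M ^ 2 + D ^ 2) with hr
  have hrnn : 0 ≤ r := Real.sqrt_nonneg _
  have hr2 : r ^ 2 = M ^ 2 + D ^ 2 := Real.sq_sqrt (by positivity)
  have h0 : distcE x A ≤ ENNReal.ofReal r := key_geom x A S w hw hw1 hsec
  have h1 : eexp (ENNReal.ofReal κ * distcE x A ^ 2) ≤
      ENNReal.ofReal (Real.exp (κ * r ^ 2)) := by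
    have hle : ENNReal.ofReal κ * distcE x A ^ 2 ≤ ENNReal.ofReal (κ * r ^ 2) := by
      rw [ENNReal.ofReal_mul hκ.le, ENNReal.ofReal_pow hrnn]
      exact mul_le_mul_right (pow_le_pow_left' h0 2) _
    exact (eexp_mono hle).trans_eq (eexp_ofReal (by positivity))
  -- Cauchy-Schwarz: D^2 ≤ ∑ w d^2
  have hCS : D ^ 2 ≤ ∑ α ∈ S, w α * d α ^ 2 := by
    have := Finset.sum_mul_sq_le_sq_mul_sq S (fun α => Real.sqrt (w α))
      (fun α => Real.sqrt (w α) * d α)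
    have e1 : ∑ α ∈ S, Real.sqrt (w α) * (Real.sqrt (w α) * d α) = D := by
      rw [hD]
      refine Finset.sum_congr rfl fun α hα => ?_
      rw [← mul_assoc, Real.mul_self_sqrt (hw α hα)]
    have e2 : ∑ α ∈ S, Real.sqrt (w α) ^ 2 = 1 := by
      rw [← hw1]
      exact Finset.sum_congr rfl fun α hα => Real.sq_sqrt (hw α hα)
    have e3 : ∑ α ∈ S, (Real.sqrt (w α) * d α) ^ 2 = ∑ α ∈ S, w α * d α ^ 2 := by
      refine Finset.sum_congr rfl fun α hα => ?_
      rw [mul_pow, Real.sq_sqrt (hw α hα)]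
    rw [e1, e2, e3, one_mul] at this
    exact this
  have h2 : Real.exp (κ * r ^ 2) ≤
      Real.exp (κ * M ^ 2) * ∏ α ∈ S, Real.exp (κ * d α ^ 2) ^ w α := by
    have : Real.exp (κ * r ^ 2) ≤ Real.exp (κ * M ^ 2 + κ * (∑ α ∈ S, w α * d α ^ 2)) := by
      rw [Real.exp_le_exp, hr2]
      nlinarith
    refine this.trans (le_of_eq ?_)
    rw [Real.exp_add]
    congr 1
    rw [Finset.mul_sum, Real.exp_sum]
    refine Finset.prod_congr rfl fun α hα => ?_
    rw [← Real.exp_mul]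
    congr 1
    ring
  have h3 : ENNReal.ofReal (Real.exp (κ * M ^ 2) * ∏ α ∈ S, Real.exp (κ * d α ^ 2) ^ w α) =
      ENNReal.ofReal (Real.exp (κ * M ^ 2)) *
        ∏ α ∈ S, ENNReal.ofReal (Real.exp (κ * d α ^ 2) ^ w α) := by
    rw [ENNReal.ofReal_mul (Real.exp_nonneg _), ENNReal.ofReal_prod_of_nonneg]
    intro α hα
    exact Real.rpow_nonneg (Real.exp_nonneg _) _
  have h4 : ∀ α ∈ S, ENNReal.ofReal (Real.exp (κ * d α ^ 2) ^ w α) ≤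
      (eexp (ENNReal.ofReal κ *
        distcE x' {u : Fin n → ℝ | Fin.snoc u α ∈ A} ^ 2)) ^ w α := by
    intro α hα
    rw [← ENNReal.ofReal_rpow_of_pos (Real.exp_pos _)]
    refine ENNReal.rpow_le_rpow ?_ (hw α hα)
    by_cases htop : distcE x' {u : Fin n → ℝ | Fin.snoc u α ∈ A} = ⊤
    · rw [htop]
      have : (⊤ : ℝ≥0∞) ^ 2 = ⊤ := by simp
      rw [this, ENNReal.mul_top (by simp [ENNReal.ofReal_eq_zero, not_le.mpr hκ])]
      simp [eexp]
    · have : distcE x' {u : Fin n → ℝ | Fin.snoc u α ∈ A} = ENNReal.ofReal (d α) :=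
        (ENNReal.ofReal_toReal htop).symm
      rw [this, ← ENNReal.ofReal_pow ENNReal.toReal_nonneg, ← ENNReal.ofReal_mul hκ.le,
        eexp_ofReal (by positivity)]
  calc eexp (ENNReal.ofReal κ * distcE x A ^ 2)
      ≤ ENNReal.ofReal (Real.exp (κ * r ^ 2)) := h1
    _ ≤ ENNReal.ofReal (Real.exp (κ * M ^ 2) * ∏ α ∈ S, Real.exp (κ * d α ^ 2) ^ w α) :=
        ENNReal.ofReal_le_ofReal h2
    _ = _ := h3
    _ ≤ ENNReal.ofReal (Real.exp (κ * M ^ 2)) *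
        ∏ α ∈ S, (eexp (ENNReal.ofReal κ *
          distcE x' {u : Fin n → ℝ | Fin.snoc u α ∈ A} ^ 2)) ^ w α :=
        mul_le_mul_right (Finset.prod_le_prod' h4) _

theorem induction_step_general_measures {n : ℕ} (hn : 1 ≤ n)
    (μ : Fin (n + 1) → Measure ℝ) (hμ : ∀ i, IsProbabilityMeasure (μ i))
    (A : Set (Fin (n + 1) → ℝ)) (hA : A.Nonempty)
    (κ : ℝ) (hκ : 0 < κ)
    -- `ν` is the finitely supported discrete probability measure with support
    -- (contained in) `S` and weights `w`
    (S : Finset ℝ) (w : ℝ → ℝ) (hw : ∀ α ∈ S, 0 ≤ w α) (hw1 : ∑ α ∈ S, w α = 1) :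
    ∫⁻ x, eexp (ENNReal.ofReal κ * distcE x A ^ 2) ∂(Measure.pi μ) ≤
      ∫⁻ x,
        (ENNReal.ofReal (Real.exp (κ * (∑ α ∈ S, w α * |x (Fin.last n) - α|) ^ 2)) *
          ∏ α ∈ S,
            (∫⁻ v, eexp (ENNReal.ofReal κ *
                distcE v {u : Fin n → ℝ | Fin.snoc u α ∈ A} ^ 2)
              ∂(Measure.pi fun i : Fin n => μ i.castSucc)) ^ w α)
        ∂(Measure.pi μ) := by
  classical
  haveI : ∀ i, IsProbabilityMeasure (μ i) := hμ
  set μ' : Measure (Fin n → ℝ) := Measure.pi fun i : Fin n => μ i.castSucc with hμ'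
  haveI : IsProbabilityMeasure μ' := by rw [hμ']; infer_instance
  set Aa : ℝ → Set (Fin n → ℝ) := fun α => {u | Fin.snoc u α ∈ A} with hAa
  set g : ℝ → (Fin n → ℝ) → ℝ≥0∞ :=
    fun α v => eexp (ENNReal.ofReal κ * distcE v (Aa α) ^ 2) with hg
  set I : ℝ → ℝ≥0∞ := fun α => ∫⁻ v, g α v ∂μ' with hI
  set F : ℝ → ℝ≥0∞ :=
    fun ω => ENNReal.ofReal (Real.exp (κ * (∑ α ∈ S, w α * |ω - α|) ^ 2)) with hF
  have hgm : ∀ α, Measurable (g α) := fun α =>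
    measurable_eexp.comp ((measurable_const.mul ((measurable_distcE (Aa α)).pow_const 2)))
  have hFm : Measurable F := by
    have hc : Continuous fun ω : ℝ => κ * (∑ α ∈ S, w α * |ω - α|) ^ 2 := by
      refine continuous_const.mul (Continuous.pow ?_ 2)
      exact continuous_finset_sum _ fun α _ =>
        continuous_const.mul ((continuous_id.sub continuous_const).abs)
    exact ENNReal.measurable_ofReal.comp (Real.measurable_exp.comp hc.measurable)
  have hIone : ∀ α, 1 ≤ I α := by
    intro α
    calc (1:ℝ≥0∞) = ∫⁻ _, 1 ∂μ' := by simp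
      _ ≤ I α := lintegral_mono fun v => one_le_eexp _
  by_cases hsec : ∀ α ∈ S, 0 < w α → (Aa α).Nonempty
  · -- main case
    set e := MeasurableEquiv.piFinSuccAbove (fun _ : Fin (n+1) => ℝ) (Fin.last n) with he
    have hmp : MeasurePreserving e (Measure.pi μ) ((μ (Fin.last n)).prod μ') := by
      have := measurePreserving_piFinSuccAbove μ (Fin.last n)
      simp only [Fin.succAbove_last] at this
      exact this
    have heval : ∀ x : Fin (n+1) → ℝ, e x = (x (Fin.last n), fun j => x j.castSucc) := by
      intro x
      refine Prod.ext ?_ ?_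
      · simp [he, MeasurableEquiv.piFinSuccAbove]
      · funext j
        simp [he, MeasurableEquiv.piFinSuccAbove, Fin.succAbove_last, Fin.init]
    set φ : ℝ × (Fin n → ℝ) → ℝ≥0∞ := fun p => F p.1 * ∏ α ∈ S, g α p.2 ^ w α with hφ
    have hφm : Measurable φ := by
      refine (hFm.comp measurable_fst).mul ?_
      refine Finset.measurable_prod _ fun α _ => ?_
      exact ENNReal.continuous_rpow_const.measurable.comp ((hgm α).comp measurable_snd)
    have step1 : ∫⁻ x, eexp (ENNReal.ofReal κ * distcE x A ^ 2) ∂(Measure.pi μ) ≤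
        ∫⁻ x, φ (e x) ∂(Measure.pi μ) := by
      refine lintegral_mono fun x => ?_
      rw [heval x]
      exact key_pointwise x A hκ S w hw hw1 hsec
    have step2 : ∫⁻ x, φ (e x) ∂(Measure.pi μ) = ∫⁻ p, φ p ∂((μ (Fin.last n)).prod μ') :=
      hmp.lintegral_comp hφm
    have step3 : ∫⁻ p, φ p ∂((μ (Fin.last n)).prod μ') =
        ∫⁻ ω, F ω * ∫⁻ v, ∏ α ∈ S, g α v ^ w α ∂μ' ∂(μ (Fin.last n)) := by
      rw [lintegral_prod φ hφm.aemeasurable]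
      refine lintegral_congr fun ω => ?_
      have hprodm : Measurable fun v : Fin n → ℝ => ∏ α ∈ S, g α v ^ w α :=
        Finset.measurable_prod _ fun α _ =>
          ENNReal.continuous_rpow_const.measurable.comp (hgm α)
      show ∫⁻ v, F ω * ∏ α ∈ S, g α v ^ w α ∂μ' = _
      exact lintegral_const_mul (F ω) hprodm
    have step4 : ∫⁻ v, ∏ α ∈ S, g α v ^ w α ∂μ' ≤ ∏ α ∈ S, I α ^ w α :=
      ENNReal.lintegral_prod_norm_pow_le S (fun α _ => (hgm α).aemeasurable) hw1 hw
    have step5 : ∫⁻ ω, F ω * ∫⁻ v, ∏ α ∈ S, g α v ^ w α ∂μ' ∂(μ (Fin.last n)) ≤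
        ∫⁻ ω, F ω * ∏ α ∈ S, I α ^ w α ∂(μ (Fin.last n)) :=
      lintegral_mono fun ω => mul_le_mul_right step4 _
    have step6 : ∫⁻ x, F (x (Fin.last n)) * ∏ α ∈ S, I α ^ w α ∂(Measure.pi μ) =
        ∫⁻ ω, F ω * ∏ α ∈ S, I α ^ w α ∂(μ (Fin.last n)) := by
      have hm2 : Measurable fun p : ℝ × (Fin n → ℝ) => F p.1 * ∏ α ∈ S, I α ^ w α :=
        (hFm.comp measurable_fst).mul_const _
      have hfun : (fun x : Fin (n+1) → ℝ => F (x (Fin.last n)) * ∏ α ∈ S, I α ^ w α) =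
          fun x => (fun p : ℝ × (Fin n → ℝ) => F p.1 * ∏ α ∈ S, I α ^ w α) (e x) := by
        funext x; rw [heval x]
      rw [hfun, hmp.lintegral_comp hm2, lintegral_prod _ hm2.aemeasurable]
      refine lintegral_congr fun ω => ?_
      simp [lintegral_const]
    calc ∫⁻ x, eexp (ENNReal.ofReal κ * distcE x A ^ 2) ∂(Measure.pi μ)
        ≤ ∫⁻ x, φ (e x) ∂(Measure.pi μ) := step1
      _ = _ := step2
      _ = _ := step3
      _ ≤ _ := step5
      _ = _ := step6.symm
  · -- degenerate case: RHS is ⊤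
    push_neg at hsec
    obtain ⟨α₀, hα₀S, hwα₀, hempty⟩ := hsec
    have hItop : I α₀ = ⊤ := by
      have hdist : ∀ v : Fin n → ℝ, distcE v (Aa α₀) = ⊤ := by
        intro v
        rw [hempty]
        set a₀ : Fin n → ℝ := fun i => if i = ⟨0, hn⟩ then 1 else 0 with ha₀
        have hunit : euclNorm a₀ = 1 := by
          have : ∑ i, a₀ i ^ 2 = 1 := by
            rw [ha₀]
            rw [Finset.sum_eq_single (⟨0, hn⟩ : Fin n)]
            · simp
            · intro i _ hne; simp [hne]
            · intro h; exact absurd (Finset.mem_univ _) h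
          rw [euclNorm, this, Real.sqrt_one]
        refine top_le_iff.mp ?_
        refine le_trans ?_ (le_iSup _ (⟨a₀, hunit⟩ : {a : Fin n → ℝ // euclNorm a = 1}))
        rw [iInf_of_empty]
      have : ∀ v : Fin n → ℝ, g α₀ v = ⊤ := by
        intro v
        rw [hg]
        simp only [hdist v]
        have h2 : (⊤ : ℝ≥0∞) ^ 2 = ⊤ := by simp
        rw [h2, ENNReal.mul_top (by simp [ENNReal.ofReal_eq_zero, not_le.mpr hκ])]
        simp [eexp]
      rw [hI]
      simp only [this]
      simp [lintegral_const]
    have hCtop : (∏ α ∈ S, I α ^ w α) = ⊤ := by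
      rw [← Finset.mul_prod_erase S _ hα₀S]
      have h1 : I α₀ ^ w α₀ = ⊤ := by rw [hItop]; exact ENNReal.top_rpow_of_pos hwα₀
      rw [h1]
      refine ENNReal.top_mul ?_
      refine Finset.prod_ne_zero_iff.mpr fun β hβ => ?_
      intro hzero
      rcases ENNReal.rpow_eq_zero_iff.mp hzero with ⟨h0, _⟩ | ⟨_, hneg⟩
      · exact absurd h0 (by intro h; have := hIone β; rw [h] at this; simp at this)
      · exact absurd hneg (not_lt.mpr (hw β (Finset.mem_of_mem_erase hβ)))
    refine le_top.trans (le_of_eq ?_)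
    symm
    have : ∀ x : Fin (n+1) → ℝ, F (x (Fin.last n)) * (∏ α ∈ S, I α ^ w α) = ⊤ := by
      intro x
      rw [hCtop, ENNReal.mul_top]
      rw [hF]
      simp [ENNReal.ofReal_eq_zero, not_le.mpr (Real.exp_pos _)]
    calc ∫⁻ x, F (x (Fin.last n)) * ∏ α ∈ S, I α ^ w α ∂(Measure.pi μ)
        = ∫⁻ _, (⊤:ℝ≥0∞) ∂(Measure.pi μ) := lintegral_congr fun x => this x
      _ = ⊤ := by simp [lintegral_const]
end

section
/- Let κ > 0, let h : ℝ → ℝ, and for t, y ∈ ℝ define H(t,y) := min over λ ∈ [0,1] of ( −λ·h(t) − (1−λ)·h(y) + κ·(1−λ)²·(y−t)² ). Then for every pair of real numbers t, y with h(y) ≥ h(t) and every real number Q ≥ 4κ·(y−t)², one has H(t,y) ≤ −h(y) + Q·log( 2 − exp( (h(t) − h(y))/Q ) ). -/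
/-- `H(t,y) = min_{λ ∈ [0,1]} ( -λ·h(t) - (1-λ)·h(y) + κ·(1-λ)²·(y-t)² )`. -/
noncomputable def Hfun (κ : ℝ) (h : ℝ → ℝ) (t y : ℝ) : ℝ :=
  ⨅ l : Set.Icc (0 : ℝ) 1,
    (-(l : ℝ) * h t - (1 - (l : ℝ)) * h y + κ * (1 - (l : ℝ)) ^ 2 * (y - t) ^ 2)

/-!
Write `D = h y - h t`, `c = κ (y - t)²` and `x = D / Q`. The quantity minimised in `H` is
`-h y + λ D + c (1 - λ)²`; taking `λ = 1 - 2m` with `m = min x (1/2)` and using `4c ≤ Q`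
bounds `H` by `-h y + Q (m - m²)`. Finally `m - m² ≤ log (2 - e^{-m}) ≤ log (2 - e^{-x})`: the
first inequality is `e^{m - m²} + e^{-m} = 2 cosh (m - m²/2) e^{-m²/2} ≤ 2`, from
`cosh s ≤ e^{s²/2}`.
-/

open Real

lemma Hfun_le (κ : ℝ) (h : ℝ → ℝ) (t y : ℝ) {l : ℝ} (hl : l ∈ Set.Icc (0 : ℝ) 1) :
    Hfun κ h t y ≤ -h y + l * (h y - h t) + κ * (1 - l) ^ 2 * (y - t) ^ 2 := by
  have hbdd : BddBelow (Set.range fun l : Set.Icc (0 : ℝ) 1 =>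
      (-(l : ℝ) * h t - (1 - (l : ℝ)) * h y + κ * (1 - (l : ℝ)) ^ 2 * (y - t) ^ 2)) :=
    (isCompact_range (by fun_prop)).bddBelow
  calc Hfun κ h t y ≤ -l * h t - (1 - l) * h y + κ * (1 - l) ^ 2 * (y - t) ^ 2 :=
        ciInf_le hbdd ⟨l, hl⟩
    _ = -h y + l * (h y - h t) + κ * (1 - l) ^ 2 * (y - t) ^ 2 := by ring

lemma exp_sub_sq_add_exp_neg_le_two {x : ℝ} (hx₀ : 0 ≤ x) (hx₄ : x ≤ 4) :
    exp (x - x ^ 2) + exp (-x) ≤ 2 := by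
  have hs : (x - x ^ 2 / 2) ^ 2 ≤ x ^ 2 := sq_le_sq' (by nlinarith) (by nlinarith)
  calc exp (x - x ^ 2) + exp (-x) = 2 * cosh (x - x ^ 2 / 2) * exp (-(x ^ 2 / 2)) := by
        rw [cosh_eq, show x - x ^ 2 = (x - x ^ 2 / 2) + -(x ^ 2 / 2) by ring,
          show -x = -(x - x ^ 2 / 2) + -(x ^ 2 / 2) by ring, exp_add, exp_add]
        ring
    _ ≤ 2 * exp ((x - x ^ 2 / 2) ^ 2 / 2) * exp (-(x ^ 2 / 2)) := by
        gcongr; exact cosh_le_exp_half_sq _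
    _ = 2 * exp ((x - x ^ 2 / 2) ^ 2 / 2 - x ^ 2 / 2) := by
        rw [mul_assoc, ← exp_add, ← sub_eq_add_neg]
    _ ≤ 2 * exp 0 := by gcongr; linarith
    _ = 2 := by simp

lemma sub_sq_le_log_two_sub_exp_neg {x : ℝ} (hx₀ : 0 ≤ x) (hx₄ : x ≤ 4) :
    x - x ^ 2 ≤ log (2 - exp (-x)) := by
  have := exp_sub_sq_add_exp_neg_le_two hx₀ hx₄
  rw [le_log_iff_exp_le (by linarith [exp_pos (x - x ^ 2)])]
  linarith

lemma Hfun_le_of_pos (κ : ℝ) (h : ℝ → ℝ) (t y : ℝ) (hty : h t ≤ h y) {Q : ℝ} (hQ₀ : 0 < Q)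
    (hQ : 4 * κ * (y - t) ^ 2 ≤ Q) :
    Hfun κ h t y ≤ -h y + Q * log (2 - exp ((h t - h y) / Q)) := by
  set x := (h y - h t) / Q
  set m := min x (1 / 2)
  have hm₀ : 0 ≤ m := le_min (div_nonneg (sub_nonneg.2 hty) hQ₀.le) (by norm_num)
  have hm : m ≤ 1 / 2 := min_le_right _ _
  have hD : h y - h t = Q * x := by simp only [x]; field_simp
  -- either `m = x` or `m = 1/2`, i.e. `λ = 1 - 2m` is the unconstrained minimiser clipped to `[0,1]`
  have hslack : (1 - 2 * m) * (x - m) = 0 := by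
    rcases min_choice x (1 / 2) with hmin | hmin <;> simp only [m, hmin] <;> ring
  calc Hfun κ h t y ≤ -h y + (1 - 2 * m) * (h y - h t) + κ * (1 - (1 - 2 * m)) ^ 2 * (y - t) ^ 2 :=
        Hfun_le κ h t y ⟨by linarith, by linarith⟩
    _ ≤ -h y + Q * (m - m ^ 2) := by
        rw [hD]
        nlinarith [mul_le_mul_of_nonneg_left hQ (sq_nonneg m), congrArg (Q * ·) hslack]
    _ ≤ -h y + Q * log (2 - exp (-m)) := by
        gcongr; exact sub_sq_le_log_two_sub_exp_neg hm₀ (by linarith)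
    _ ≤ -h y + Q * log (2 - exp ((h t - h y) / Q)) := by
        have : (h t - h y) / Q ≤ -m := by
          rw [← neg_sub, neg_div]; exact neg_le_neg (min_le_left _ _)
        gcongr
        linarith [exp_le_one_iff.2 (neg_nonpos.2 hm₀)]

theorem H_log_upper_bound (κ : ℝ) (hκ : 0 < κ) (h : ℝ → ℝ) (t y : ℝ)
    (hty : h t ≤ h y) (Q : ℝ) (hQ : 4 * κ * (y - t) ^ 2 ≤ Q) :
    Hfun κ h t y ≤ -h y + Q * Real.log (2 - Real.exp ((h t - h y) / Q)) := by
  obtain rfl | hQ₀ := (le_trans (by positivity) hQ : (0 : ℝ) ≤ Q).eq_or_lt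
  · have := Hfun_le κ h t y (l := 0) ⟨le_rfl, zero_le_one⟩
    simp only [zero_mul, add_zero, sub_zero, one_pow, mul_one] at this ⊢
    linarith
  · exact Hfun_le_of_pos κ h t y hty hQ₀ hQ
end
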